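/- Let p be prime with |∑_{1 ≤ n < p} λ(n)λ(p−n)| = p − 1, and let 1 ≤ d < p. Then S_λ(dξ) = λ(d)·S_λ(ξ) for all ξ ∈ ℤ/pℤ, where S_λ(ξ) := ∑_{1 ≤ n < p} λ(n)·exp(2πi·nξ/p). -/

import Mathlib

open Finset

def lam (n : ℕ) : ℤ := (-1) ^ (ArithmeticFunction.cardFactors n)

noncomputable def Slam (p : ℕ) (ξ : ℕ) : ℂ :=
  ∑ n ∈ Finset.Ico 1 p, (lam n : ℂ) * Complex.exp (2 * Real.pi * Complex.I * (n * ξ) / p)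

/-!
Each term `λ(n) λ(p - n)` is `±1`, so `|∑| = p - 1` forces all of them to equal the term at
`n = 1`, i.e. `λ(p - n) = λ(p - 1) λ(n)`. This reflection makes `n ↦ λ(n mod p)` multiplicative
on the nonzero residues: if `q x < p < (q + 1) x`, write `p = q x + t` and `x = r + t`; reflecting
both `p = q x + t` and `p = q r + (q + 1) t` gives `λ((q + 1) x - p) = λ(q + 1) λ(x)`, and a double
induction on `a` and `x` reduces `a x mod p` to smaller products. Multiplication by `d` then
permutes `{1, …, p - 1}` with `λ(d n mod p) = λ(d) λ(n)`, and reindexing `S_λ(d ξ)` along it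
gives `λ(d) S_λ(ξ)`.
-/

lemma lam_mul_self (n : ℕ) : lam n * lam n = 1 := by
  rw [lam, ← pow_add]
  exact Even.neg_one_pow ⟨_, rfl⟩

lemma abs_lam (n : ℕ) : |lam n| = 1 := by
  simp [lam]

lemma lam_one : lam 1 = 1 := by
  simp [lam]

lemma lam_mul {m n : ℕ} (hm : m ≠ 0) (hn : n ≠ 0) : lam (m * n) = lam m * lam n := by
  rw [lam, ArithmeticFunction.cardFactors_mul hm hn, pow_add, lam, lam]

lemma Finset.eq_of_abs_sum_eq_card {ι : Type*} {s : Finset ι} {f : ι → ℤ}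
    (hf : ∀ i ∈ s, |f i| ≤ 1) (h : |∑ i ∈ s, f i| = #s) {i j : ι} (hi : i ∈ s) (hj : j ∈ s) :
    f i = f j := by
  have hbound i (hi : i ∈ s) := abs_le.mp (hf i hi)
  rcases (abs_eq (by positivity)).mp h with h | h
  · have hone := (sum_eq_sum_iff_of_le fun i hi => (hbound i hi).2).mp (by simpa using h)
    rw [hone i hi, hone j hj]
  · have hneg := (sum_eq_sum_iff_of_le fun i hi => (hbound i hi).1).mp (by simpa using h.symm)
    rw [← hneg i hi, ← hneg j hj]

lemma lam_sub_eq_of_abs_sum {p : ℕ} (h : |∑ n ∈ Ico 1 p, lam n * lam (p - n)| = (p : ℤ) - 1)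
    {n : ℕ} (hn : n ∈ Ico 1 p) : lam (p - n) = lam (p - 1) * lam n := by
  have hp : 1 < p := by simp only [mem_Ico] at hn; omega
  have hprod : lam n * lam (p - n) = lam 1 * lam (p - 1) := by
    refine eq_of_abs_sum_eq_card (f := fun m => lam m * lam (p - m))
      (fun m _ => by simp [abs_mul, abs_lam]) ?_ hn (mem_Ico.mpr ⟨le_rfl, hp⟩)
    rw [h, Nat.card_Ico, Nat.cast_sub hp.le, Nat.cast_one]
  rw [lam_one, one_mul] at hprod
  linear_combination -lam (p - n) * lam_mul_self n + lam n * hprod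

lemma lam_succ_mul_sub {p : ℕ} (hrefl : ∀ n ∈ Ico 1 p, lam (p - n) = lam (p - 1) * lam n)
    {c x : ℕ} (hc : c ≠ 0) (hlt : c * x < p) (hgt : p < (c + 1) * x) :
    lam ((c + 1) * x - p) = lam (c + 1) * lam x := by
  rw [add_mul, one_mul] at hgt ⊢
  obtain ⟨t, hp⟩ : ∃ t, p = c * x + t := ⟨_, (Nat.add_sub_of_le hlt.le).symm⟩
  obtain ⟨r, hx⟩ : ∃ r, x = r + t := ⟨x - t, by omega⟩
  rw [show c * x + x - p = r by omega]
  have hr : r ≠ 0 := by omega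
  have ht : t ≠ 0 := by omega
  have hcr_pos : 0 < c * r := Nat.mul_pos (by omega) (by omega)
  have hsplit : c * x = c * r + c * t := by rw [hx, mul_add]
  -- reflect `p = c * r + (c + 1) * t` and `p = c * x + t`
  have hcr : lam c * lam r = lam (p - 1) * (lam (c + 1) * lam t) := by
    rw [← lam_mul hc hr, ← lam_mul (by omega) ht, ← hrefl _ (by simp only [mem_Ico]; lia)]
    congr 1; lia
  have hcx : lam c * lam x = lam (p - 1) * lam t := by
    rw [← lam_mul hc (by omega), ← hrefl t (by simp only [mem_Ico]; omega)]
    congr 1; omega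
  have hrx : lam r * lam x = lam (c + 1) := by
    linear_combination lam c * lam x * hcr + lam (p - 1) * lam (c + 1) * lam t * hcx
      - lam r * lam x * lam_mul_self c + lam (c + 1) * lam (p - 1) * lam (p - 1) * lam_mul_self t
      + lam (c + 1) * lam_mul_self (p - 1)
  linear_combination lam x * hrx - lam r * lam_mul_self x

lemma mul_mod_mem_Ico {p a x : ℕ} (hp : p.Prime) (ha : a ∈ Ico 1 p) (hx : x ∈ Ico 1 p) :
    a * x % p ∈ Ico 1 p := by
  rw [mem_Ico] at ha hx ⊢
  refine ⟨Nat.pos_of_ne_zero fun h => ?_, Nat.mod_lt _ hp.pos⟩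
  rcases hp.dvd_mul.mp (Nat.dvd_of_mod_eq_zero h) with hdvd | hdvd <;>
    exact absurd (Nat.le_of_dvd (by omega) hdvd) (by omega)

lemma lam_mul_mod {p : ℕ} (hp : p.Prime)
    (hrefl : ∀ n ∈ Ico 1 p, lam (p - n) = lam (p - 1) * lam n)
    {a x : ℕ} (ha : a ∈ Ico 1 p) (hx : x ∈ Ico 1 p) : lam (a * x % p) = lam a * lam x := by
  induction a using Nat.strong_induction_on generalizing x with | _ a iha =>
  induction x using Nat.strong_induction_on with | _ x ihx =>
  have hax := mul_mod_mem_Ico hp ha hx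
  rw [mem_Ico] at ha hx hax
  rcases lt_or_ge (a * x) p with hlt | hge
  · rw [Nat.mod_eq_of_lt hlt, lam_mul (by omega) (by omega)]
  -- `q + 1` is the least multiplier taking `x` past `p`, and it is at most `a`
  set q := p / x
  have hx_ndvd : ¬ x ∣ p := fun h => by
    rcases hp.eq_one_or_self_of_dvd x h with rfl | rfl <;> omega
  have hlt : q * x < p :=
    (Nat.div_mul_le_self p x).lt_of_ne fun h => hx_ndvd ⟨q, by rw [← h, mul_comm]⟩
  have hgt : p < (q + 1) * x := by
    rw [mul_comm]; exact Nat.lt_mul_div_succ p (by omega)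
  have hq : q ≠ 0 := (Nat.div_pos (by omega) (by omega)).ne'
  have hqa : q + 1 ≤ a := (Nat.div_lt_iff_lt_mul (by omega)).mpr
    (hge.lt_of_ne fun h => by simp [← h] at hax)
  have hcarry := lam_succ_mul_sub hrefl hq hlt hgt
  rcases hqa.lt_or_eq with hqa | rfl
  · obtain ⟨e, he⟩ : ∃ e, (q + 1) * x = p + e := ⟨_, (Nat.add_sub_of_le hgt.le).symm⟩
    rw [he, Nat.add_sub_cancel_left] at hcarry
    have hex : e < x := by rw [add_mul, one_mul] at he; omega
    -- both sides of this congruence are covered by the induction: `q + 1 < a` and `e < x`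
    have hcong : (q + 1) * (a * x % p) % p = a * e % p := by
      rw [Nat.mul_mod_mod, mul_left_comm, he, mul_add, mul_comm a p, Nat.mul_add_mod]
    have key := iha (q + 1) hqa (mem_Ico.mpr ⟨q.succ_pos, hqa.trans ha.2⟩) (mem_Ico.mpr hax)
    rw [hcong, ihx e hex (mem_Ico.mpr ⟨by omega, by omega⟩), hcarry] at key
    linear_combination -lam (q + 1) * key
      - (lam (a * x % p) - lam a * lam x) * lam_mul_self (q + 1)
  · rw [Nat.mod_eq_sub_mod hge, Nat.mod_eq_of_lt (by rw [add_mul, one_mul]; omega), hcarry]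

lemma mul_mod_injOn {p d : ℕ} (hp : p.Prime) (hd : d ∈ Ico 1 p) :
    Set.InjOn (fun n => d * n % p) (Ico 1 p : Set ℕ) := by
  intro m hm n hn h
  rw [coe_Ico, Set.mem_Ico] at hm hn
  rw [mem_Ico] at hd
  have hmn : m ≡ n [MOD p] :=
    Nat.ModEq.cancel_left_of_coprime (Nat.coprime_of_lt_prime (by omega) hd.2 hp) h
  rwa [Nat.ModEq, Nat.mod_eq_of_lt hm.2, Nat.mod_eq_of_lt hn.2] at hmn

lemma Slam_eq_sum_toCircle (p ξ : ℕ) [NeZero p] :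
    Slam p ξ = ∑ n ∈ Ico 1 p, (lam n : ℂ) * ZMod.toCircle ((n * ξ : ℕ) : ZMod p) := by
  simp only [Slam, ZMod.toCircle_natCast]
  push_cast
  rfl

theorem stmt_10 (p : ℕ) (hp : p.Prime)
    (h : |∑ n ∈ Finset.Ico 1 p, lam n * lam (p - n)| = (p : ℤ) - 1)
    (d : ℕ) (hd1 : 1 ≤ d) (hdp : d < p) :
    ∀ ξ : ℕ, Slam p (d * ξ) = (lam d : ℂ) * Slam p ξ := by
  intro ξ
  have : NeZero p := ⟨hp.ne_zero⟩
  have hd : d ∈ Ico 1 p := mem_Ico.mpr ⟨hd1, hdp⟩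
  have hmaps : Set.MapsTo (fun n => d * n % p) (Ico 1 p : Set ℕ) (Ico 1 p) :=
    fun n hn => mul_mod_mem_Ico hp hd hn
  have hinj := mul_mod_injOn hp hd
  rw [Slam_eq_sum_toCircle, Slam_eq_sum_toCircle, mul_sum]
  refine sum_nbij _ hmaps hinj (surjOn_of_injOn_of_card_le _ hmaps hinj le_rfl) fun n hn => ?_
  have hlam : lam n = lam d * lam (d * n % p) := by
    rw [lam_mul_mod hp (fun m hm => lam_sub_eq_of_abs_sum h hm) hd hn]
    linear_combination -lam n * lam_mul_self d
  have hcast : ((n * (d * ξ) : ℕ) : ZMod p) = ((d * n % p * ξ : ℕ) : ZMod p) := by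
    push_cast [ZMod.natCast_mod]
    ring
  rw [hcast, hlam]
  push_cast
  ring
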